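/- arXiv:math/0702780 — 8 statements merged into one kernel-verified Lean document; each statement's English description precedes it below -/
import Mathlib

section
/- Let p be a prime and A a subset of F_p with |A| > 1. Then there exists an absolute constant c > 0 (independent of p and A) such that max{|A+A|, |AA|} ≥ c · min{ |A|^{5/3} p^{-1/3} (log |A|)^{-1/3} , |A|^{2/3} p^{1/3} (log |A|)^{-1/3} }. -/
/-!
Write `M = max |A+A| |AA|` and count the solutions of `t v + a = s` with `(t, v, a, s)` in
`T × V × A × S = AA × (A \ {0})⁻¹ × A × (A+A)`. Every `(a, b, c) ∈ A × (A \ {0}) × A` gives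
the solution `(ab, b⁻¹, c, a + c)`, so there are at least `|A|²(|A| - 1)` of them. Detecting
the equation with additive characters, the trivial character contributes `|T||V||A||S|/p`;
for `r ≠ 0`, Cauchy–Schwarz and Parseval bound the bilinear sum over `T × V` by `√(p|T||V|)`
and the remaining sum over `r` by `p√(|A||S|)`. Comparing the two counts gives Garaev's
estimate `min(√(p|A|), |A|²/√p) ≤ 4M`. The two terms of the stated minimum are the weighted
geometric means `|A|^{1/3} X^{2/3}` with `X = |A|²/√p` resp. `X = √(p|A|)`, and `|A| ≤ M`, so
they are at most `4M`; the logarithmic factor is at most `(log 2)^{-1/3}`.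
-/

open Finset
open scoped Pointwise ComplexConjugate

def incidenceCount {R : Type*} [Mul R] [Add R] [DecidableEq R] (T V A S : Finset R) : ℕ :=
  #{x ∈ T ×ˢ V ×ˢ A ×ˢ S | x.1 * x.2.1 + x.2.2.1 = x.2.2.2}

lemma card_mul_card_erase_mul_card_le_incidenceCount {R : Type*} [DivisionRing R] [DecidableEq R]
    (A : Finset R) : #A * #(A.erase 0) * #A ≤ incidenceCount (A * A) (A.erase 0)⁻¹ A (A + A) := by
  rw [← card_product, ← card_product]
  refine card_le_card_of_injOn (fun x => (x.1.1 * x.1.2, x.1.2⁻¹, x.2, x.1.1 + x.2)) ?_ ?_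
  · rintro ⟨⟨a, b⟩, c⟩ hx
    simp only [coe_product, Set.mem_prod, mem_coe, mem_erase] at hx
    obtain ⟨⟨ha, hb0, hb⟩, hc⟩ := hx
    simp only [coe_filter, Set.mem_ofPred_eq, mem_product]
    refine ⟨⟨mul_mem_mul ha hb, inv_mem_inv (mem_erase.2 ⟨hb0, hb⟩), hc, add_mem_add ha hc⟩, ?_⟩
    rw [mul_inv_cancel_right₀ hb0]
  · rintro ⟨⟨a, b⟩, c⟩ hx ⟨⟨a', b'⟩, c'⟩ _ h
    simp only [coe_product, Set.mem_prod, mem_coe, mem_erase] at hx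
    simp only [Prod.mk.injEq, inv_inj] at h
    obtain ⟨hab, rfl, rfl, -⟩ := h
    simp [mul_right_cancel₀ hx.1.2.1 hab]

section Fourier

variable {F : Type*} [Field F] {ψ : AddChar F ℂ}

def charSum (ψ : AddChar F ℂ) (B : Finset F) (r : F) : ℂ := ∑ b ∈ B, ψ (r * b)

@[simp] lemma charSum_zero (B : Finset F) : charSum ψ B 0 = #B := by simp [charSum]

variable [Fintype F] [DecidableEq F]

lemma sum_apply_mul_eq_ite (hψ : ψ.IsPrimitive) (x : F) :
    ∑ r, ψ (r * x) = if x = 0 then (Fintype.card F : ℂ) else 0 := by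
  simpa using AddChar.sum_mulShift x hψ

lemma sum_norm_charSum_sq (hψ : ψ.IsPrimitive) (B : Finset F) :
    ∑ r, ‖charSum ψ B r‖ ^ 2 = Fintype.card F * #B := by
  suffices ∑ r, (‖charSum ψ B r‖ ^ 2 : ℂ) = Fintype.card F * #B by exact_mod_cast this
  calc ∑ r, (‖charSum ψ B r‖ ^ 2 : ℂ) = ∑ r, charSum ψ B r * conj (charSum ψ B r) := by
        simp only [Complex.mul_conj']
    _ = ∑ b ∈ B, ∑ c ∈ B, ∑ r, ψ (r * (b - c)) := by
        simp only [charSum, map_sum, sum_mul_sum, ← AddChar.map_neg_eq_conj,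
          ← AddChar.map_add_eq_mul, sub_eq_add_neg, mul_add, mul_neg]
        rw [sum_comm]
        exact sum_congr rfl fun _ _ => sum_comm
    _ = ∑ b ∈ B, ∑ c ∈ B, if b = c then (Fintype.card F : ℂ) else 0 := by
        simp only [sum_apply_mul_eq_ite hψ, sub_eq_zero]
    _ = Fintype.card F * #B := by simp [mul_comm]

lemma incidenceCount_mul_card_eq (hψ : ψ.IsPrimitive)
    (T V A S : Finset F) :
    (incidenceCount T V A S : ℂ) * Fintype.card F =
      ∑ r, (∑ t ∈ T, charSum ψ V (r * t)) * charSum ψ A r * conj (charSum ψ S r) := by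
  calc (incidenceCount T V A S : ℂ) * Fintype.card F
      = ∑ x ∈ T ×ˢ V ×ˢ A ×ˢ S, ∑ r, ψ (r * (x.1 * x.2.1 + x.2.2.1 - x.2.2.2)) := by
        simp only [incidenceCount, sum_apply_mul_eq_ite hψ, sub_eq_zero, ← sum_filter, sum_const,
          nsmul_eq_mul]
    _ = _ := by
        rw [sum_comm]
        simp only [sum_product_right, charSum, map_sum, sum_mul, mul_sum,
          ← AddChar.map_neg_eq_conj, ← AddChar.map_add_eq_mul]
        ring_nf
        exact sum_congr rfl fun _ _ => sum_congr rfl fun _ _ => sum_congr rfl fun _ _ => sum_comm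

lemma norm_sum_charSum_mul_le (hψ : ψ.IsPrimitive) {r : F}
    (hr : r ≠ 0) (T V : Finset F) :
    ‖∑ t ∈ T, charSum ψ V (r * t)‖ ≤ √(#T * (Fintype.card F * #V)) := by
  refine Real.le_sqrt_of_sq_le ?_
  calc ‖∑ t ∈ T, charSum ψ V (r * t)‖ ^ 2 ≤ (∑ t ∈ T, ‖charSum ψ V (r * t)‖) ^ 2 := by
        gcongr; exact norm_sum_le _ _
    _ ≤ #T * ∑ t ∈ T, ‖charSum ψ V (r * t)‖ ^ 2 := sq_sum_le_card_mul_sum_sq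
    _ ≤ #T * ∑ t, ‖charSum ψ V (r * t)‖ ^ 2 := by
        gcongr
        exact subset_univ T
    _ = #T * (Fintype.card F * #V) := by
        rw [← sum_norm_charSum_sq hψ V]
        exact congrArg _ (Equiv.sum_comp (Equiv.mulLeft₀ r hr) fun u => ‖charSum ψ V u‖ ^ 2)

theorem incidenceCount_mul_card_le (hψ : ψ.IsPrimitive)
    (T V A S : Finset F) :
    (incidenceCount T V A S : ℝ) * Fintype.card F ≤
      #T * #V * #A * #S + Fintype.card F * √(Fintype.card F * (#T * #V * #A * #S)) := by
  set q : ℝ := (Fintype.card F : ℝ)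
  set X : F → ℂ := fun r =>
    (∑ t ∈ T, charSum ψ V (r * t)) * charSum ψ A r * conj (charSum ψ S r)
  have hX0 : ‖X 0‖ = #T * #V * #A * #S := by
    simp [X, mul_assoc]
  have hX : ∀ r ∈ univ.erase 0,
      ‖X r‖ ≤ √(#T * (q * #V)) * (‖charSum ψ A r‖ * ‖charSum ψ S r‖) := by
    intro r hr
    simp only [X, norm_mul, Complex.norm_conj, mul_assoc]
    gcongr
    exact norm_sum_charSum_mul_le hψ (ne_of_mem_erase hr) T V
  have hAS : ∑ r, ‖charSum ψ A r‖ * ‖charSum ψ S r‖ ≤ √(q * #A) * √(q * #S) := by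
    simpa only [sum_norm_charSum_sq hψ] using Real.sum_mul_le_sqrt_mul_sqrt univ
      (fun r => ‖charSum ψ A r‖) (fun r => ‖charSum ψ S r‖)
  calc (incidenceCount T V A S : ℝ) * q = ‖∑ r, X r‖ := by
        rw [← incidenceCount_mul_card_eq hψ]
        simp [q]
    _ ≤ ‖X 0‖ + ∑ r ∈ univ.erase 0, ‖X r‖ := by
        rw [← add_sum_erase _ _ (mem_univ 0)]
        exact (norm_add_le _ _).trans (add_le_add_right (norm_sum_le _ _) _)
    _ ≤ #T * #V * #A * #S + √(#T * (q * #V)) * ∑ r, ‖charSum ψ A r‖ * ‖charSum ψ S r‖ := by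
        rw [hX0, mul_sum]
        gcongr
        exact (sum_le_sum hX).trans
          (sum_le_sum_of_subset_of_nonneg (subset_univ _) fun _ _ _ => by positivity)
    _ ≤ #T * #V * #A * #S + √(#T * (q * #V)) * (√(q * #A) * √(q * #S)) := by gcongr
    _ = #T * #V * #A * #S + q * √(q * (#T * #V * #A * #S)) := by
        rw [← Real.sqrt_mul (by positivity), ← Real.sqrt_mul (by positivity),
          show (#T : ℝ) * (q * #V) * (q * #A * (q * #S)) = q ^ 2 * (q * (#T * #V * #A * #S)) by
            ring,
          Real.sqrt_mul (by positivity), Real.sqrt_sq (by positivity)]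

end Fourier

lemma min_sqrt_le_of_cube_le {q a M : ℝ} (hq : 0 < q) (ha : 0 < a) (hM : 0 ≤ M)
    (h : q * a ^ 3 ≤ 2 * ((M * a) ^ 2 + q * √(q * (M * a) ^ 2))) :
    min √(q * a) (a ^ 2 / √q) ≤ 4 * M := by
  rw [Real.sqrt_mul hq.le, Real.sqrt_sq (by positivity)] at h
  rcases le_or_gt (q * a ^ 3) (4 * (M * a) ^ 2) with hsum | hprod
  · have : a ^ 2 * (q * a) ≤ a ^ 2 * (2 * M) ^ 2 := by nlinarith
    refine (min_le_left _ _).trans ((Real.sqrt_le_left (by positivity)).2 ?_)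
    nlinarith [le_of_mul_le_mul_left this (by positivity)]
  · have : q * a * a ^ 2 ≤ q * a * (4 * M * √q) := by nlinarith
    refine (min_le_right _ _).trans ?_
    rw [div_le_iff₀ (Real.sqrt_pos.2 hq)]
    linarith [le_of_mul_le_mul_left this (by positivity)]

theorem min_sqrt_le_four_mul_max_card_add_card_mul {p : ℕ} [Fact p.Prime] (A : Finset (ZMod p))
    (hA : 2 ≤ #A) :
    min √(p * #A) (#A ^ 2 / √p) ≤ 4 * max (#(A + A) : ℝ) #(A * A) := by
  set M := max (#(A + A) : ℝ) #(A * A)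
  have hp : (0 : ℝ) < p := by exact_mod_cast (Fact.out : p.Prime).pos
  have ha : (2 : ℝ) ≤ #A := by exact_mod_cast hA
  have hcard : (#(A * A) : ℝ) * #(A.erase 0)⁻¹ * #A * #(A + A) ≤ (M * #A) ^ 2 := by
    have hinv : #(A.erase 0)⁻¹ ≤ #A := by rw [card_inv]; exact card_erase_le
    calc _ ≤ M * #A * #A * M := by
          gcongr
          exacts [le_max_right _ _, le_max_left _ _]
      _ = (M * #A) ^ 2 := by ring
  have herase : (#A : ℝ) - 1 ≤ #(A.erase 0) := by
    have : #A ≤ #(A.erase 0) + 1 := by have := pred_card_le_card_erase (s := A) (a := 0); omega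
    linarith [show (#A : ℝ) ≤ #(A.erase 0) + 1 by exact_mod_cast this]
  have hlower : (#A : ℝ) ^ 3 / 2 ≤ incidenceCount (A * A) (A.erase 0)⁻¹ A (A + A) :=
    calc (#A : ℝ) ^ 3 / 2 ≤ #A * (#A - 1) * #A := by
          nlinarith [mul_nonneg (sq_nonneg (#A : ℝ)) (sub_nonneg.2 ha)]
      _ ≤ #A * #(A.erase 0) * #A := by gcongr
      _ ≤ _ := by exact_mod_cast card_mul_card_erase_mul_card_le_incidenceCount A
  have hupper := incidenceCount_mul_card_le (ZMod.isPrimitive_stdAddChar p)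
    (A * A) (A.erase 0)⁻¹ A (A + A)
  rw [ZMod.card] at hupper
  refine min_sqrt_le_of_cube_le hp (by positivity) (by positivity) ?_
  calc p * (#A : ℝ) ^ 3 ≤ 2 * (incidenceCount (A * A) (A.erase 0)⁻¹ A (A + A) * p) := by
        nlinarith
    _ ≤ _ := by gcongr; exact hupper.trans (by gcongr)

lemma min_rpow_le_of_min_sqrt_le {q a M : ℝ} (hq : 0 < q) (ha : 0 ≤ a) (haM : a ≤ M)
    (h : min √(q * a) (a ^ 2 / √q) ≤ 4 * M) :
    min (a ^ ((5 : ℝ) / 3) * q ^ (-(1 : ℝ) / 3)) (a ^ ((2 : ℝ) / 3) * q ^ ((1 : ℝ) / 3))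
      ≤ 4 * M := by
  have hM : 0 ≤ 4 * M := by linarith
  have mean_le {Z : ℝ} (hZ : 0 ≤ Z) (hZM : Z ≤ 4 * M) :
      a ^ ((1 : ℝ) / 3) * Z ^ ((2 : ℝ) / 3) ≤ 4 * M :=
    calc a ^ ((1 : ℝ) / 3) * Z ^ ((2 : ℝ) / 3)
        ≤ (4 * M) ^ ((1 : ℝ) / 3) * (4 * M) ^ ((2 : ℝ) / 3) := by gcongr; linarith
      _ = 4 * M := by rw [← Real.rpow_add' hM (by norm_num)]; norm_num
  have e1 : a ^ ((5 : ℝ) / 3) * q ^ (-(1 : ℝ) / 3)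
      = a ^ ((1 : ℝ) / 3) * (a ^ 2 / √q) ^ ((2 : ℝ) / 3) := by
    rw [neg_div, Real.rpow_neg hq.le, ← div_eq_mul_inv,
      Real.div_rpow (by positivity) (by positivity), Real.sqrt_eq_rpow, ← Real.rpow_mul hq.le,
      ← Real.rpow_natCast, ← Real.rpow_mul ha, mul_div_assoc', ← Real.rpow_add' ha (by norm_num)]
    norm_num
  have e2 : a ^ ((2 : ℝ) / 3) * q ^ ((1 : ℝ) / 3)
      = a ^ ((1 : ℝ) / 3) * √(q * a) ^ ((2 : ℝ) / 3) := by
    rw [Real.sqrt_eq_rpow, ← Real.rpow_mul (by positivity), Real.mul_rpow hq.le ha,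
      mul_left_comm, ← Real.rpow_add' ha (by norm_num)]
    norm_num
    ring
  rcases min_le_iff.1 h with h | h
  · exact (min_le_right _ _).trans (e2 ▸ mean_le (by positivity) h)
  · exact (min_le_left _ _).trans (e1 ▸ mean_le (by positivity) h)

lemma log_two_rpow_mul_log_rpow_le_one {a : ℝ} (ha : 2 ≤ a) :
    Real.log 2 ^ ((1 : ℝ) / 3) * Real.log a ^ (-(1 : ℝ) / 3) ≤ 1 := by
  have hlog2 : 0 < Real.log 2 := Real.log_pos one_lt_two
  have hlog : Real.log 2 ≤ Real.log a := Real.log_le_log two_pos ha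
  rw [neg_div, Real.rpow_neg (hlog2.le.trans hlog), ← div_eq_mul_inv,
    div_le_one (Real.rpow_pos_of_pos (hlog2.trans_le hlog) _)]
  gcongr

/-- Garaev's explicit sum-product estimate in `F_p` (Theorem 2). -/
theorem sum_product_estimate_trig :
    ∃ c : ℝ, 0 < c ∧
      ∀ (p : ℕ), p.Prime → ∀ A : Finset (ZMod p), 1 < A.card →
        c * min
            ((A.card : ℝ) ^ ((5 : ℝ) / 3) * (p : ℝ) ^ (-(1 : ℝ) / 3) *
              Real.log (A.card : ℝ) ^ (-(1 : ℝ) / 3))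
            ((A.card : ℝ) ^ ((2 : ℝ) / 3) * (p : ℝ) ^ ((1 : ℝ) / 3) *
              Real.log (A.card : ℝ) ^ (-(1 : ℝ) / 3))
          ≤ max ((A + A).card : ℝ) ((A * A).card : ℝ) := by
  have hlog2 : 0 < Real.log 2 := Real.log_pos one_lt_two
  refine ⟨Real.log 2 ^ ((1 : ℝ) / 3) / 4, by positivity, fun p hp A hA => ?_⟩
  have := Fact.mk hp
  have ha : (2 : ℝ) ≤ #A := by exact_mod_cast hA
  have hmin := min_rpow_le_of_min_sqrt_le (by exact_mod_cast hp.pos) (by positivity)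
    (le_max_of_le_left (by exact_mod_cast card_le_card_add_self))
    (min_sqrt_le_four_mul_max_card_add_card_mul A hA)
  rw [← min_mul_of_nonneg _ _ (by positivity)]
  calc _ = Real.log 2 ^ ((1 : ℝ) / 3) * Real.log #A ^ (-(1 : ℝ) / 3) *
        min (#A ^ ((5 : ℝ) / 3) * (p : ℝ) ^ (-(1 : ℝ) / 3))
          (#A ^ ((2 : ℝ) / 3) * (p : ℝ) ^ ((1 : ℝ) / 3)) / 4 := by ring
    _ ≤ 1 * (4 * max (#(A + A) : ℝ) #(A * A)) / 4 := by
        gcongr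
        exact log_two_rpow_mul_log_rpow_le_one ha
    _ = _ := by ring
end

section
/- Let p be a prime and A a subset of F_p. There exists an absolute constant c > 0 such that whenever 1 < |A| < p^{2/3}, one has max{|A+A|, |AA|} ≥ c · |A|^{5/3} p^{-1/3} (log |A|)^{-1/3}. -/
open Pointwise

/-!
For `A` in a field with `q` elements and `0 ∉ A`, every triple `(a, b, c) ∈ A³` gives the
solution `a (b + c) = ab + ac` of `xy = z + w` with `x ∈ A`, `y ∈ A + A` and `z, w ∈ AA`, so
this equation has at least `|A|³` solutions there. Counting the solutions with additive
characters, their number is `|A| |A + A| |AA|² / q` up to an error of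
`√(q |A| |A + A| |AA|²)`, by Cauchy–Schwarz and Parseval. Comparing the two bounds gives
`|A|⁵ ≤ 128 q max(|A + A|, |AA|)³` as soon as `|A|³ ≤ q²`, which is stronger than the
claimed estimate because `log |A| ≥ log 2`.
-/

open Finset ComplexConjugate

def mulAddSolutions {R : Type*} [Mul R] [Add R] [DecidableEq R] (X Y Z W : Finset R) :
    Finset ((R × R) × R × R) :=
  ((X ×ˢ Y) ×ˢ Z ×ˢ W).filter fun s => s.1.1 * s.1.2 = s.2.1 + s.2.2

lemma card_pow_three_le_card_mulAddSolutions {R : Type*} [CommRing R] [IsDomain R]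
    [DecidableEq R] {A : Finset R} (h0 : (0 : R) ∉ A) :
    #A ^ 3 ≤ #(mulAddSolutions A (A + A) (A * A) (A * A)) := by
  rw [pow_succ, pow_two, ← card_product, ← card_product]
  refine card_le_card_of_injOn (fun s => ((s.1.1, s.1.2 + s.2), (s.1.1 * s.1.2, s.1.1 * s.2)))
    ?_ ?_
  · rintro ⟨⟨a, b⟩, c⟩ hs
    simp only [coe_product, Set.mem_prod, mem_coe] at hs
    simp only [mulAddSolutions, coe_filter, mem_product, Set.mem_ofPred_eq]
    exact ⟨⟨⟨hs.1.1, add_mem_add hs.1.2 hs.2⟩, mul_mem_mul hs.1.1 hs.1.2,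
      mul_mem_mul hs.1.1 hs.2⟩, mul_add _ _ _⟩
  · rintro ⟨⟨a, b⟩, c⟩ hs ⟨⟨a', b'⟩, c'⟩ - h
    simp only [Prod.mk.injEq] at h
    obtain ⟨⟨rfl, -⟩, hb, hc⟩ := h
    have ha : a ≠ 0 :=
      ne_of_mem_of_not_mem (mem_product.1 (mem_product.1 (mem_coe.1 hs)).1).1 h0
    simp [mul_left_cancel₀ ha hb, mul_left_cancel₀ ha hc]

section FiniteField

variable {F : Type*} [Field F] {ψ : AddChar F ℂ}

def expSum (ψ : AddChar F ℂ) (B : Finset F) (t : F) : ℂ := ∑ z ∈ B, ψ (t * z)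

lemma expSum_zero (B : Finset F) : expSum ψ B 0 = #B := by simp [expSum]

variable [Fintype F] [DecidableEq F]

lemma sum_norm_expSum_sq (hψ : ψ.IsPrimitive) (B : Finset F) :
    ∑ t, ‖expSum ψ B t‖ ^ 2 = Fintype.card F * #B := by
  have h t : (‖expSum ψ B t‖ ^ 2 : ℂ) = ∑ z ∈ B, ∑ z' ∈ B, ψ (t * (z - z')) := by
    rw [← Complex.mul_conj', expSum, map_sum, sum_mul_sum]
    simp_rw [← AddChar.map_neg_eq_conj, ← AddChar.map_add_eq_mul, mul_sub, sub_eq_add_neg]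
  apply Complex.ofReal_injective
  push_cast
  simp_rw [h]
  rw [sum_comm]
  simp_rw [sum_comm (s := univ), AddChar.sum_mulShift _ hψ, sub_eq_zero]
  simp [mul_comm]

lemma norm_sum_expSum_mul_sq_le (hψ : ψ.IsPrimitive) {t : F} (ht : t ≠ 0) (X Y : Finset F) :
    ‖∑ x ∈ X, expSum ψ Y (t * x)‖ ^ 2 ≤ #X * (Fintype.card F * #Y) := by
  calc ‖∑ x ∈ X, expSum ψ Y (t * x)‖ ^ 2
      ≤ (∑ x ∈ X, ‖expSum ψ Y (t * x)‖) ^ 2 := by gcongr; exact norm_sum_le _ _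
  _ ≤ #X * ∑ x ∈ X, ‖expSum ψ Y (t * x)‖ ^ 2 := sq_sum_le_card_mul_sum_sq
  _ = #X * ∑ u ∈ X.image (t * ·), ‖expSum ψ Y u‖ ^ 2 := by
        rw [sum_image (mul_right_injective₀ ht).injOn]
  _ ≤ #X * ∑ u, ‖expSum ψ Y u‖ ^ 2 := by gcongr; exact subset_univ _
  _ = #X * (Fintype.card F * #Y) := by rw [sum_norm_expSum_sq hψ]

lemma sum_norm_expSum_mul_norm_expSum_le (hψ : ψ.IsPrimitive) (Z W : Finset F) :
    ∑ t, ‖expSum ψ Z t‖ * ‖expSum ψ W t‖ ≤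
      √(Fintype.card F * #Z) * √(Fintype.card F * #W) := by
  simpa only [sum_norm_expSum_sq hψ] using
    Real.sum_mul_le_sqrt_mul_sqrt univ (‖expSum ψ Z ·‖) (‖expSum ψ W ·‖)

lemma card_mul_card_mulAddSolutions_eq_sum (hψ : ψ.IsPrimitive) (X Y Z W : Finset F) :
    (Fintype.card F : ℂ) * #(mulAddSolutions X Y Z W) =
      ∑ t, (∑ x ∈ X, expSum ψ Y (t * x)) * conj (expSum ψ Z t) * conj (expSum ψ W t) := by
  have h t : (∑ x ∈ X, expSum ψ Y (t * x)) * conj (expSum ψ Z t) * conj (expSum ψ W t) =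
      ∑ s ∈ (X ×ˢ Y) ×ˢ Z ×ˢ W, ψ (t * (s.1.1 * s.1.2 - s.2.1 - s.2.2)) := by
    have hsplit x y z w :
        ψ (t * (x * y - z - w)) = ψ (t * x * y) * conj (ψ (t * z)) * conj (ψ (t * w)) := by
      simp only [← AddChar.map_neg_eq_conj, ← AddChar.map_add_eq_mul]; ring_nf
    simp only [sum_product, hsplit, ← mul_sum, ← sum_mul, expSum, map_sum, mul_assoc]
  rw [mulAddSolutions, card_filter, Nat.cast_sum, mul_sum]
  simp_rw [h]
  rw [sum_comm]
  refine sum_congr rfl fun s _ => ?_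
  simp only [AddChar.sum_mulShift _ hψ, sub_sub, sub_eq_zero]
  split_ifs <;> simp

lemma norm_sum_compl_zero_le (hψ : ψ.IsPrimitive) (X Y Z W : Finset F) :
    ‖∑ t ∈ {0}ᶜ,
        (∑ x ∈ X, expSum ψ Y (t * x)) * conj (expSum ψ Z t) * conj (expSum ψ W t)‖ ≤
      Fintype.card F * √(Fintype.card F * (#X * #Y * #Z * #W)) := by
  set q : ℝ := (Fintype.card F : ℝ)
  calc _ ≤ ∑ t ∈ {0}ᶜ,
        ‖∑ x ∈ X, expSum ψ Y (t * x)‖ * (‖expSum ψ Z t‖ * ‖expSum ψ W t‖) := by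
        refine (norm_sum_le _ _).trans_eq (sum_congr rfl fun t _ => ?_)
        simp only [norm_mul, Complex.norm_conj, mul_assoc]
    _ ≤ ∑ t ∈ {0}ᶜ, √(#X * (q * #Y)) * (‖expSum ψ Z t‖ * ‖expSum ψ W t‖) := by
        gcongr with t ht
        exact Real.le_sqrt_of_sq_le (norm_sum_expSum_mul_sq_le hψ (by simpa using ht) X Y)
    _ ≤ √(#X * (q * #Y)) * ∑ t, ‖expSum ψ Z t‖ * ‖expSum ψ W t‖ := by
        rw [← mul_sum]
        gcongr
        exact subset_univ _
    _ ≤ √(#X * (q * #Y)) * (√(q * #Z) * √(q * #W)) := by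
        gcongr; exact sum_norm_expSum_mul_norm_expSum_le hψ Z W
    _ = q * √(q * (#X * #Y * #Z * #W)) := by
        rw [← Real.sqrt_mul (by positivity), ← Real.sqrt_mul (by positivity),
          show #X * (q * #Y) * (q * #Z * (q * #W)) = q ^ 2 * (q * (#X * #Y * #Z * #W)) by ring,
          Real.sqrt_mul (by positivity), Real.sqrt_sq (by positivity)]

variable (F) in
theorem card_mulAddSolutions_mul_le (X Y Z W : Finset F) :
    #(mulAddSolutions X Y Z W) * (Fintype.card F : ℝ) ≤
      #X * #Y * #Z * #W + Fintype.card F * √(Fintype.card F * (#X * #Y * #Z * #W)) := by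
  set ψ := AddChar.FiniteField.primitiveChar_to_Complex F
  have hψ : ψ.IsPrimitive := AddChar.FiniteField.primitiveChar_to_Complex_isPrimitive F
  have hcount := card_mul_card_mulAddSolutions_eq_sum hψ X Y Z W
  rw [Fintype.sum_eq_add_sum_compl 0] at hcount
  simp only [zero_mul, expSum_zero, sum_const, nsmul_eq_mul, Complex.conj_natCast] at hcount
  set N := #(mulAddSolutions X Y Z W)
  have herror : ((N * Fintype.card F - #X * #Y * #Z * #W : ℝ) : ℂ) = ∑ t ∈ {0}ᶜ,
      (∑ x ∈ X, expSum ψ Y (t * x)) * conj (expSum ψ Z t) * conj (expSum ψ W t) := by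
    push_cast; linear_combination hcount
  have hbound := (congrArg norm herror).trans_le (norm_sum_compl_zero_le hψ X Y Z W)
  rw [Complex.norm_real] at hbound
  linarith [Real.le_norm_self (N * Fintype.card F - #X * #Y * #Z * #W : ℝ)]

lemma pow_five_le_of_pow_three_mul_le {m q M : ℝ} (hm : 0 ≤ m) (hq : 0 < q) (hM : 0 ≤ M)
    (hmq : m ^ 3 ≤ q ^ 2) (h : m ^ 3 * q ≤ m * M ^ 3 + q * √(q * (m * M ^ 3))) :
    m ^ 5 ≤ 4 * q * M ^ 3 := by
  by_cases hmain : m ^ 3 * q ≤ 2 * (m * M ^ 3)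
  · have : m ^ 5 * q ≤ 2 * q * M ^ 3 * q :=
      calc m ^ 5 * q = m ^ 2 * (m ^ 3 * q) := by ring
        _ ≤ m ^ 2 * (2 * (m * M ^ 3)) := by gcongr
        _ = 2 * m ^ 3 * M ^ 3 := by ring
        _ ≤ 2 * q ^ 2 * M ^ 3 := by gcongr
        _ = 2 * q * M ^ 3 * q := by ring
    linarith [le_of_mul_le_mul_right this hq, (by positivity : 0 ≤ q * M ^ 3)]
  · have herr : m ^ 3 < 2 * √(q * (m * M ^ 3)) := by
      by_contra! hle
      nlinarith
    have hsq : (m ^ 3) ^ 2 < (2 * √(q * (m * M ^ 3))) ^ 2 := by gcongr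
    rw [mul_pow, Real.sq_sqrt (by positivity)] at hsq
    nlinarith

theorem card_pow_five_le_of_zero_notMem {A : Finset F} (h0 : (0 : F) ∉ A)
    (hAq : (#A : ℝ) ^ 3 ≤ (Fintype.card F : ℝ) ^ 2) :
    (#A : ℝ) ^ 5 ≤ 4 * Fintype.card F * max (#(A + A) : ℝ) #(A * A) ^ 3 := by
  set M := max (#(A + A) : ℝ) #(A * A)
  set q := (Fintype.card F : ℝ)
  have hE : (#A * #(A + A) * #(A * A) * #(A * A) : ℝ) ≤ #A * M ^ 3 := by
    have hs : (#(A + A) : ℝ) ≤ M := le_max_left _ _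
    have hp : (#(A * A) : ℝ) ≤ M := le_max_right _ _
    calc _ = (#A : ℝ) * (#(A + A) * #(A * A) * #(A * A)) := by ring
      _ ≤ #A * (M * M * M) := by gcongr
      _ = #A * M ^ 3 := by ring
  have hlow : (#A : ℝ) ^ 3 ≤ #(mulAddSolutions A (A + A) (A * A) (A * A)) := by
    exact_mod_cast card_pow_three_le_card_mulAddSolutions h0
  refine pow_five_le_of_pow_three_mul_le (by positivity) (by positivity) (by positivity) hAq ?_
  calc (#A : ℝ) ^ 3 * q ≤ #(mulAddSolutions A (A + A) (A * A) (A * A)) * q := by gcongr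
    _ ≤ _ := card_mulAddSolutions_mul_le F A (A + A) (A * A) (A * A)
    _ ≤ #A * M ^ 3 + q * √(q * (#A * M ^ 3)) := by gcongr

theorem card_pow_five_le {A : Finset F} (hA : 1 < #A)
    (hAq : (#A : ℝ) ^ 3 ≤ (Fintype.card F : ℝ) ^ 2) :
    (#A : ℝ) ^ 5 ≤ 128 * Fintype.card F * max (#(A + A) : ℝ) #(A * A) ^ 3 := by
  have hsub : A.erase 0 ⊆ A := erase_subset 0 A
  have hAB : (#A : ℝ) ≤ 2 * #(A.erase 0) := by
    have := pred_card_le_card_erase (s := A) (a := 0)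
    exact_mod_cast (by omega : #A ≤ 2 * #(A.erase 0))
  have hBA : (#(A.erase 0) : ℝ) ≤ #A := by exact_mod_cast card_le_card hsub
  have hB := card_pow_five_le_of_zero_notMem (notMem_erase 0 A)
    ((pow_le_pow_left₀ (by positivity) hBA 3).trans hAq)
  have hM : max (#(A.erase 0 + A.erase 0) : ℝ) #(A.erase 0 * A.erase 0) ≤
      max (#(A + A) : ℝ) #(A * A) := by
    apply max_le_max <;> exact_mod_cast card_le_card (by gcongr)
  calc (#A : ℝ) ^ 5 ≤ (2 * #(A.erase 0)) ^ 5 := by gcongr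
    _ = 32 * (#(A.erase 0) : ℝ) ^ 5 := by ring
    _ ≤ 32 * (4 * Fintype.card F * max (#(A + A) : ℝ) #(A * A) ^ 3) := by
      gcongr; exact hB.trans (by gcongr)
    _ = 128 * Fintype.card F * max (#(A + A) : ℝ) #(A * A) ^ 3 := by ring

end FiniteField

lemma rpow_div_three_pow_three {x : ℝ} (hx : 0 ≤ x) (k : ℝ) : (x ^ (k / 3)) ^ 3 = x ^ k := by
  rw [← Real.rpow_mul_natCast hx]; norm_num

lemma pow_three_le_sq_of_lt_rpow {n q : ℝ} (hn : 0 ≤ n) (hq : 0 ≤ q)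
    (h : n < q ^ ((2 : ℝ) / 3)) :
    n ^ 3 ≤ q ^ 2 := by
  have := pow_le_pow_left₀ hn h.le 3
  rwa [rpow_div_three_pow_three hq, Real.rpow_two] at this

lemma rpow_five_thirds_le {K n q M : ℝ} (hK : 0 < K) (hn : 2 ≤ n) (hq : 0 < q) (hM : 0 ≤ M)
    (h : n ^ 5 ≤ K * q * M ^ 3) :
    (Real.log 2 / K) ^ ((1 : ℝ) / 3) *
      (n ^ ((5 : ℝ) / 3) * q ^ (-(1 : ℝ) / 3) * Real.log n ^ (-(1 : ℝ) / 3)) ≤ M := by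
  have hlog2 : 0 < Real.log 2 := Real.log_pos one_lt_two
  have hlog : Real.log 2 ≤ Real.log n := Real.log_le_log two_pos hn
  have hlogn : 0 < Real.log n := hlog2.trans_le hlog
  refine le_of_pow_le_pow_left₀ three_ne_zero hM ?_
  rw [mul_pow, mul_pow, mul_pow, rpow_div_three_pow_three (by positivity),
    rpow_div_three_pow_three (by positivity), rpow_div_three_pow_three (by positivity),
    rpow_div_three_pow_three (by positivity), Real.rpow_one, Real.rpow_neg_one,
    Real.rpow_neg_one, Real.rpow_ofNat]
  calc Real.log 2 / K * (n ^ 5 * q⁻¹ * (Real.log n)⁻¹)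
      = n ^ 5 / (K * q) * (Real.log 2 / Real.log n) := by field_simp
    _ ≤ n ^ 5 / (K * q) * 1 := by gcongr; exact div_le_one_of_le₀ hlog (by positivity)
    _ ≤ M ^ 3 := by rw [mul_one, div_le_iff₀ (by positivity)]; linarith

/-- If `1 < |A| < p^{2/3}` then
`max{|A+A|, |AA|} ≥ c |A|^{5/3} p^{-1/3} (log |A|)^{-1/3}`. -/
theorem sum_product_estimate_trig_small :
    ∃ c : ℝ, 0 < c ∧
      ∀ (p : ℕ), p.Prime → ∀ A : Finset (ZMod p),
        1 < A.card →
        (A.card : ℝ) < (p : ℝ) ^ ((2 : ℝ) / 3) →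
        c * ((A.card : ℝ) ^ ((5 : ℝ) / 3) * (p : ℝ) ^ (-(1 : ℝ) / 3) *
              Real.log (A.card : ℝ) ^ (-(1 : ℝ) / 3))
          ≤ max ((A + A).card : ℝ) ((A * A).card : ℝ) := by
  refine ⟨(Real.log 2 / 128) ^ ((1 : ℝ) / 3), by positivity, fun p hp A hA hAp => ?_⟩
  have := Fact.mk hp
  have hp0 : (0 : ℝ) < p := by exact_mod_cast hp.pos
  have hcube : (#A : ℝ) ^ 3 ≤ (Fintype.card (ZMod p) : ℝ) ^ 2 := by
    rw [ZMod.card]; exact pow_three_le_sq_of_lt_rpow (by positivity) hp0.le hAp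
  have hbound := card_pow_five_le hA hcube
  rw [ZMod.card p] at hbound
  exact rpow_five_thirds_le (by norm_num) (by exact_mod_cast hA) hp0 (by positivity) hbound
end

section
/- Let p be a prime and let A₁ be a subset of F_p with 1 < |A₁| < p^{1/2}. Then there exist elements a₁, a₂, b₁, b₂ ∈ A₁ with a₁ ≠ a₂ such that |(a₁−a₂)*A₁ + (a₁−a₂)*A₁ + (b₁−b₂)*A₁| ≥ 0.5 |A₁|². -/
/-!
Let `Q = (A - A) / (A - A)`. For `ξ = (b₁ - b₂) / (a₁ - a₂) ∈ Q` the set in question is the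
dilate `(a₁ - a₂) • (A + A + ξ • A)`, so it suffices to find `ξ ∈ Q` with
`|A + A + ξ A| ≥ |A|² / 2`.

If `Q ≠ 𝔽_p`, then since `0 ∈ Q` and `𝔽_p` is generated by `1`, some `ξ ∈ Q` has `ξ + 1 ∉ Q`. That
makes `(x, y) ↦ x + (ξ + 1) y` injective on `A × A`, and `A + (ξ + 1) A ⊆ A + A + ξ A`.

If `Q = 𝔽_p`, a nontrivial solution of `a₁ + ξ b₁ = a₂ + ξ b₂` determines `ξ`, so some of the
`p - 1 ≥ |A|²` nonzero `ξ` has at most `|A|²` of them. Then `E(A, ξ A) ≤ 2 |A|²`, and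
Cauchy–Schwarz gives `|A + ξ A| ≥ |A|⁴ / E(A, ξ A) ≥ |A|² / 2`.
-/

open Pointwise
open Finset
open scoped Combinatorics.Additive

/-- The quotient set `(A - A) / (A - A)` (nonzero denominators), written without division. -/
def diffRatioSet {R : Type*} [CommRing R] (A : Finset R) : Set R :=
  {ξ | ∃ a₁ ∈ A, ∃ a₂ ∈ A, ∃ b₁ ∈ A, ∃ b₂ ∈ A, a₁ ≠ a₂ ∧ b₁ - b₂ = ξ * (a₁ - a₂)}

theorem ZMod.exists_mem_add_one_notMem {n : ℕ} [NeZero n] {S : Set (ZMod n)} (h0 : 0 ∈ S)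
    (hS : S ≠ Set.univ) : ∃ x ∈ S, x + 1 ∉ S := by
  by_contra! hstep
  have hnat : ∀ k : ℕ, (k : ZMod n) ∈ S := by
    intro k
    induction k with
    | zero => simpa using h0
    | succ k ih => simpa using hstep _ ih
  exact hS (Set.eq_univ_of_forall fun x => ZMod.natCast_zmod_val x ▸ hnat x.val)

section CommRing

variable {R : Type*} [CommRing R] (A : Finset R)

theorem zero_mem_diffRatioSet (hA : 1 < #A) : 0 ∈ diffRatioSet A := by
  obtain ⟨a₁, ha₁, a₂, ha₂, hne⟩ := one_lt_card.mp hA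
  exact ⟨a₁, ha₁, a₂, ha₂, a₁, ha₁, a₁, ha₁, hne, by simp⟩

variable [DecidableEq R]

theorem sq_card_le_card_add_smul_of_notMem {η : R} (hη : η ∉ diffRatioSet A) :
    #A ^ 2 ≤ #(A + η • A) := by
  rw [sq, ← card_product]
  refine card_le_card_of_injOn (fun x => x.1 + η * x.2)
    (fun x hx => add_mem_add (mem_product.1 hx).1 (smul_mem_smul_finset (mem_product.1 hx).2))
    fun x hx y hy hxy => ?_
  simp only [coe_product, Set.mem_prod, mem_coe] at hx hy
  have hx₂ : x.2 = y.2 := by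
    by_contra hne
    exact hη ⟨y.2, hy.2, x.2, hx.2, x.1, hx.1, y.1, hy.1, Ne.symm hne,
      by linear_combination (hxy : x.1 + η * x.2 = y.1 + η * y.2)⟩
  exact Prod.ext (by simpa [hx₂] using hxy) hx₂

theorem add_add_one_smul_subset (ξ : R) : A + (ξ + 1) • A ⊆ A + A + ξ • A := by
  intro z hz
  obtain ⟨x, hx, _, hy', rfl⟩ := mem_add.1 hz
  obtain ⟨y, hy, rfl⟩ := mem_smul_finset.1 hy'
  exact mem_add.2 ⟨x + y, add_mem_add hx hy, ξ • y, smul_mem_smul_finset hy, by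
    simp only [smul_eq_mul]; ring⟩

def collisionSet (ξ : R) : Finset ((R × R) × R × R) :=
  {x ∈ (A ×ˢ A) ×ˢ A ×ˢ A | x.1.1 ≠ x.1.2 ∧ x.1.1 + ξ * x.2.1 = x.1.2 + ξ * x.2.2}

theorem addEnergy_smul_le (ξ : R) : E[A, ξ • A] ≤ #A ^ 2 + #(collisionSet A ξ) := by
  rw [addEnergy, ← card_filter_add_card_filter_not (fun x => x.1.1 = x.1.2)]
  refine add_le_add ?_ ?_
  · refine (card_le_card_of_injOn (t := A ×ˢ (ξ • A))
      (fun x : (R × R) × R × R => (x.1.1, x.2.1)) ?_ ?_).trans ?_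
    · intro x hx
      simp only [mem_coe, mem_filter, mem_product] at hx
      exact mem_product.2 ⟨hx.1.1.1.1, hx.1.1.2.1⟩
    · intro x hx y hy hxy
      simp only [coe_filter, mem_filter, mem_product, Set.mem_ofPred_eq] at hx hy
      simp only [Prod.mk.injEq] at hxy
      have hx₂ := hx.1.2
      have hy₂ := hy.1.2
      rw [hx.2] at hx₂
      rw [hy.2] at hy₂
      ext
      · exact hxy.1
      · rw [← hx.2, hxy.1, hy.2]
      · exact hxy.2
      · rw [← add_left_cancel hx₂, ← add_left_cancel hy₂, hxy.2]
    · rw [card_product, sq]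
      exact Nat.mul_le_mul_left _ card_smul_finset_le
  · refine card_le_card_of_surjOn
      (fun x : (R × R) × R × R => ((x.1.1, x.1.2), ξ * x.2.1, ξ * x.2.2)) ?_
    intro x hx
    simp only [coe_filter, mem_filter, mem_product, Set.mem_ofPred_eq] at hx
    obtain ⟨⟨⟨⟨ha₁, ha₂⟩, hb₁, hb₂⟩, heq⟩, hne⟩ := hx
    obtain ⟨b₁, hb₁, hb₁'⟩ := mem_smul_finset.1 hb₁
    obtain ⟨b₂, hb₂, hb₂'⟩ := mem_smul_finset.1 hb₂
    refine ⟨((x.1.1, x.1.2), b₁, b₂), ?_, ?_⟩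
    · simp only [collisionSet, coe_filter, mem_product, Set.mem_ofPred_eq]
      rw [← smul_eq_mul, ← smul_eq_mul, hb₁', hb₂']
      exact ⟨⟨⟨ha₁, ha₂⟩, hb₁, hb₂⟩, hne, heq⟩
    · simp only [← smul_eq_mul, hb₁', hb₂']

theorem disjoint_collisionSet [NoZeroDivisors R] {ξ₁ ξ₂ : R} (h : ξ₁ ≠ ξ₂) :
    Disjoint (collisionSet A ξ₁) (collisionSet A ξ₂) := by
  refine disjoint_left.2 fun x hx₁ hx₂ => h ?_
  simp only [collisionSet, mem_filter] at hx₁ hx₂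
  have hb : x.2.2 - x.2.1 ≠ 0 := by
    rintro hb
    rw [sub_eq_zero.1 hb] at hx₁
    exact hx₁.2.1 (add_right_cancel hx₁.2.2)
  exact mul_right_cancel₀ hb (by linear_combination hx₂.2.2 - hx₁.2.2)

end CommRing

section Field

variable {K : Type*} [Field K] [DecidableEq K] (A : Finset K)

theorem card_smul_add_smul_add_mul_smul {c : K} (hc : c ≠ 0) (ξ : K) :
    #(c • A + c • A + (ξ * c) • A) = #(A + A + ξ • A) := by
  rw [mul_comm, ← smul_smul, ← smul_add, ← smul_add, card_smul_finset₀ hc]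

variable [Fintype K]

theorem exists_card_collisionSet_le (hA : #A ^ 2 < Fintype.card K) :
    ∃ ξ ≠ 0, #(collisionSet A ξ) ≤ #A ^ 2 := by
  have hsum :
      ∑ ξ ∈ univ.erase (0 : K), #(collisionSet A ξ) ≤ ∑ _ξ ∈ univ.erase (0 : K), #A ^ 2 := by
    rw [← card_biUnion fun ξ₁ _ ξ₂ _ h => disjoint_collisionSet A h, sum_const, smul_eq_mul,
      card_erase_of_mem (mem_univ _), card_univ]
    calc _ ≤ #((A ×ˢ A) ×ˢ A ×ˢ A) := card_le_card (biUnion_subset.2 fun _ _ => filter_subset _ _)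
      _ = #A ^ 2 * #A ^ 2 := by simp only [card_product]; ring
      _ ≤ _ := Nat.mul_le_mul_right _ (by omega)
  obtain ⟨ξ, hξ, h⟩ := exists_le_of_sum_le ⟨1, mem_erase.2 ⟨one_ne_zero, mem_univ _⟩⟩ hsum
  exact ⟨ξ, ne_of_mem_erase hξ, h⟩

theorem exists_sq_card_le_two_mul_card_add_smul (hA : #A ^ 2 < Fintype.card K) :
    ∃ ξ ≠ (0 : K), #A ^ 2 ≤ 2 * #(A + ξ • A) := by
  obtain ⟨ξ, hξ, hcoll⟩ := exists_card_collisionSet_le A hA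
  refine ⟨ξ, hξ, ?_⟩
  have hE : E[A, ξ • A] ≤ 2 * #A ^ 2 := by linarith [addEnergy_smul_le A ξ]
  have hCS := le_card_add_mul_addEnergy A (ξ • A)
  rw [card_smul_finset₀ hξ] at hCS
  rcases (#A ^ 2).eq_zero_or_pos with h0 | hpos
  · simp [h0]
  · exact Nat.le_of_mul_le_mul_right (by linarith [Nat.mul_le_mul_left #(A + ξ • A) hE]) hpos

end Field

theorem exists_mem_diffRatioSet_sq_card_le_two_mul {p : ℕ} [Fact p.Prime] (A : Finset (ZMod p))
    (h1 : 1 < #A) (h2 : #A ^ 2 < p) :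
    ∃ ξ ∈ diffRatioSet A, #A ^ 2 ≤ 2 * #(A + A + ξ • A) := by
  by_cases hR : diffRatioSet A = Set.univ
  · obtain ⟨ξ, -, hξ⟩ := exists_sq_card_le_two_mul_card_add_smul A (by rwa [ZMod.card])
    refine ⟨ξ, hR ▸ Set.mem_univ ξ, hξ.trans ?_⟩
    rw [add_assoc]
    exact Nat.mul_le_mul_left 2 (card_le_card_add_left (card_pos.1 (by omega)))
  · obtain ⟨ξ, hξ, hξ₁⟩ := ZMod.exists_mem_add_one_notMem (zero_mem_diffRatioSet A h1) hR
    refine ⟨ξ, hξ, ?_⟩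
    calc #A ^ 2 ≤ #(A + (ξ + 1) • A) := sq_card_le_card_add_smul_of_notMem A hξ₁
      _ ≤ #(A + A + ξ • A) := card_le_card (add_add_one_smul_subset A ξ)
      _ ≤ 2 * #(A + A + ξ • A) := by omega

/-- Glibichuk–Konyagin lemma for small sets. -/
theorem glibichuk_konyagin_small (p : ℕ) (hp : p.Prime) (A₁ : Finset (ZMod p))
    (h1 : 1 < A₁.card) (h2 : (A₁.card : ℝ) < (p : ℝ) ^ ((1 : ℝ) / 2)) :
    ∃ a₁ ∈ A₁, ∃ a₂ ∈ A₁, ∃ b₁ ∈ A₁, ∃ b₂ ∈ A₁, a₁ ≠ a₂ ∧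
      (0.5 : ℝ) * (A₁.card : ℝ) ^ 2 ≤
        (((a₁ - a₂) • A₁ + (a₁ - a₂) • A₁ + (b₁ - b₂) • A₁).card : ℝ) := by
  have := Fact.mk hp
  have hsq : #A₁ ^ 2 < p := by
    rw [← Real.sqrt_eq_rpow, Real.lt_sqrt (Nat.cast_nonneg _)] at h2
    exact_mod_cast h2
  obtain ⟨ξ, ⟨a₁, ha₁, a₂, ha₂, b₁, hb₁, b₂, hb₂, hne, hb⟩, hcard⟩ :=
    exists_mem_diffRatioSet_sq_card_le_two_mul A₁ h1 hsq
  refine ⟨a₁, ha₁, a₂, ha₂, b₁, hb₁, b₂, hb₂, hne, ?_⟩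
  rw [hb, card_smul_add_smul_add_mul_smul A₁ (sub_ne_zero.2 hne)]
  have : (#A₁ ^ 2 : ℝ) ≤ 2 * #(A₁ + A₁ + ξ • A₁) := by exact_mod_cast hcard
  linarith
end

section
/- Let p be a prime and let A₁ be a subset of F_p with |A₁| > p^{1/2}. Then there exist elements a₁, a₂, b₁, b₂ ∈ A₁ such that |(a₁−a₂)*A₁ + (b₁−b₂)*A₁| ≥ 0.5 p. -/
/-!
Let `N ξ` count the quadruples `(a, a', c, c') ∈ A⁴` with `a + ξ c = a' + ξ c'`. A quadruple with
`c ≠ c'` is counted for exactly one `ξ`, one with `c = c'` for every `ξ` if `a = a'` and for none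
otherwise, so `∑ ξ, N ξ = q |A|² + |A|⁴ - |A|³ < 2 |A|⁴` once `|A|² > q`. Hence some `ξ ≠ 0` has
`(q - 1) N ξ < 2 |A|⁴`; as `N ξ` bounds the additive energy of `A` and `ξ • A`, Cauchy–Schwarz gives
`|A + ξ • A| ≥ |A|⁴ / N ξ > (q - 1) / 2`. Finally `|A|² > q` yields two distinct pairs
`(a₁, b₁), (a₂, b₂) ∈ A²` with `ξ a₁ - b₁ = ξ a₂ - b₂`, and then
`(a₁ - a₂) • A + (b₁ - b₂) • A = (a₁ - a₂) • (A + ξ • A)`.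
-/

open Pointwise Finset

lemma Fintype.exists_ne_card_sub_one_mul_le_sum {α : Type*} [Fintype α] [DecidableEq α]
    [Nontrivial α] (a : α) (f : α → ℕ) :
    ∃ b ≠ a, (Fintype.card α - 1) * f b ≤ ∑ c, f c := by
  have hcard : #(univ.erase a) = Fintype.card α - 1 := by
    rw [card_erase_of_mem (mem_univ _), card_univ]
  obtain ⟨b, hb, hle⟩ := Finset.exists_le_of_sum_le (f := fun b => (Fintype.card α - 1) * f b)
    (g := fun _ => ∑ c, f c) ((erase_nonempty (mem_univ a)).2 univ_nontrivial) (by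
      rw [← mul_sum, sum_const, hcard, smul_eq_mul]
      exact Nat.mul_le_mul_left _ (sum_le_sum_of_subset (subset_univ _)))
  exact ⟨b, ne_of_mem_erase hb, hle⟩

lemma exists_sub_eq_sub_mul {R : Type*} [CommRing R] [Fintype R] (A : Finset R)
    (hA : Fintype.card R < #A ^ 2) (ξ : R) :
    ∃ a₁ ∈ A, ∃ a₂ ∈ A, ∃ b₁ ∈ A, ∃ b₂ ∈ A, a₁ ≠ a₂ ∧ b₁ - b₂ = (a₁ - a₂) * ξ := by
  have hlt : #(univ : Finset R) < #(A ×ˢ A) := by rwa [card_univ, card_product, ← sq]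
  obtain ⟨⟨a₁, b₁⟩, h₁, ⟨a₂, b₂⟩, h₂, hne, heq⟩ := exists_ne_map_eq_of_card_lt_of_maps_to hlt
    (f := fun x => ξ * x.1 - x.2) fun _ _ => mem_univ _
  rw [mem_product] at h₁ h₂
  have hb : b₁ - b₂ = (a₁ - a₂) * ξ := by linear_combination -heq
  refine ⟨a₁, h₁.1, a₂, h₂.1, b₁, h₁.2, b₂, h₂.2, fun ha => hne ?_, hb⟩
  rw [ha, sub_self, zero_mul, sub_eq_zero] at hb
  rw [ha, hb]

section

variable {F : Type*} [Field F] [DecidableEq F]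

def dilateEnergy (A : Finset F) (ξ : F) : ℕ :=
  #{x ∈ (A ×ˢ A) ×ˢ A ×ˢ A | x.1.1 + ξ * x.2.1 = x.1.2 + ξ * x.2.2}

lemma addEnergy_smul_le_dilateEnergy (A : Finset F) {ξ : F} (hξ : ξ ≠ 0) :
    addEnergy A (ξ • A) ≤ dilateEnergy A ξ := by
  refine card_le_card_of_injOn (fun x => (x.1, (ξ⁻¹ * x.2.1, ξ⁻¹ * x.2.2))) ?_ ?_
  · rintro ⟨⟨a₁, a₂⟩, b₁, b₂⟩ hx
    simp only [coe_filter, Set.mem_ofPred_eq, mem_product, mem_smul_finset, smul_eq_mul] at hx ⊢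
    obtain ⟨⟨⟨ha₁, ha₂⟩, ⟨c₁, hc₁, rfl⟩, ⟨c₂, hc₂, rfl⟩⟩, hsum⟩ := hx
    simp only [inv_mul_cancel_left₀ hξ]
    exact ⟨⟨⟨ha₁, ha₂⟩, hc₁, hc₂⟩, hsum⟩
  · rintro ⟨a, b₁, b₂⟩ - ⟨a', b₁', b₂'⟩ - h
    simp only [Prod.mk.injEq, mul_right_inj' (inv_ne_zero hξ)] at h
    simp [h]

variable [Fintype F]

lemma card_filter_add_mul_eq_add_mul_of_ne {c c' : F} (a a' : F) (hc : c ≠ c') :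
    #{ξ | a + ξ * c = a' + ξ * c'} = 1 := by
  rw [card_eq_one]
  refine ⟨(a' - a) / (c - c'), ?_⟩
  ext ξ
  rw [mem_filter, mem_singleton, eq_div_iff (sub_ne_zero.2 hc)]
  simp only [mem_univ, true_and]
  constructor <;> intro h <;> linear_combination h

-- Both sides are shifted so that no truncated subtraction occurs.
lemma card_filter_add_mul_eq_add_mul (a a' c c' : F) :
    #{ξ | a + ξ * c = a' + ξ * c'} + (if c = c' then 1 else 0)
      = 1 + if a = a' ∧ c = c' then Fintype.card F else 0 := by
  by_cases hc : c = c'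
  · subst hc
    by_cases ha : a = a' <;> simp [ha, add_comm]
  · simp [hc, card_filter_add_mul_eq_add_mul_of_ne a a' hc]

lemma sum_dilateEnergy_add (A : Finset F) :
    ∑ ξ, dilateEnergy A ξ + #A ^ 3 = Fintype.card F * #A ^ 2 + #A ^ 4 := by
  have hswap : ∑ ξ, dilateEnergy A ξ =
      ∑ x ∈ (A ×ˢ A) ×ˢ A ×ˢ A, #{ξ | x.1.1 + ξ * x.2.1 = x.1.2 + ξ * x.2.2} := by
    simp only [dilateEnergy, card_filter]
    exact sum_comm
  have hdiag : #{x ∈ (A ×ˢ A) ×ˢ A ×ˢ A | x.2.1 = x.2.2} = #A ^ 3 := by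
    rw [filter_product_right (fun y : F × F => y.1 = y.2), card_product, card_product,
      ← diag_eq_filter, diag_card]
    ring
  have hdiag₂ : #{x ∈ (A ×ˢ A) ×ˢ A ×ˢ A | x.1.1 = x.1.2 ∧ x.2.1 = x.2.2} = #A ^ 2 := by
    rw [filter_product (fun y : F × F => y.1 = y.2) (fun y : F × F => y.1 = y.2), card_product,
      ← diag_eq_filter, diag_card]
    ring
  rw [hswap, ← hdiag, card_filter, ← sum_add_distrib,
    sum_congr rfl fun x _ => card_filter_add_mul_eq_add_mul x.1.1 x.1.2 x.2.1 x.2.2,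
    sum_add_distrib, sum_const, ← sum_filter, sum_const, hdiag₂, card_product, card_product]
  ring

theorem exists_ne_zero_card_le_two_mul_card_add_smul (A : Finset F)
    (hA : Fintype.card F < #A ^ 2) : ∃ ξ : F, ξ ≠ 0 ∧ Fintype.card F ≤ 2 * #(A + ξ • A) := by
  obtain ⟨ξ, hξ, hmin⟩ := Fintype.exists_ne_card_sub_one_mul_le_sum 0 (dilateEnergy A)
  refine ⟨ξ, hξ, ?_⟩
  have hCS : #A ^ 2 * #A ^ 2 ≤ #(A + ξ • A) * dilateEnergy A ξ := by
    have := le_card_add_mul_addEnergy A (ξ • A)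
    rw [card_smul_finset₀ hξ] at this
    exact this.trans (Nat.mul_le_mul_left _ (addEnergy_smul_le_dilateEnergy A hξ))
  have hsum : ∑ η, dilateEnergy A η < 2 * (#A ^ 2 * #A ^ 2) := by
    have hq : Fintype.card F * #A ^ 2 < #A ^ 2 * #A ^ 2 :=
      Nat.mul_lt_mul_of_pos_right hA (Nat.zero_le _ |>.trans_lt hA)
    have := sum_dilateEnergy_add A
    have : #A ^ 4 = #A ^ 2 * #A ^ 2 := by ring
    omega
  have hq := Fintype.one_lt_card (α := F)
  by_contra! h
  have h' : 2 * #(A + ξ • A) ≤ Fintype.card F - 1 := by omega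
  refine lt_irrefl (2 * ((Fintype.card F - 1) * (#A ^ 2 * #A ^ 2))) ?_
  calc 2 * ((Fintype.card F - 1) * (#A ^ 2 * #A ^ 2))
        ≤ 2 * ((Fintype.card F - 1) * (#(A + ξ • A) * dilateEnergy A ξ)) := by gcongr
      _ = 2 * #(A + ξ • A) * ((Fintype.card F - 1) * dilateEnergy A ξ) := by ring
      _ ≤ (Fintype.card F - 1) * ∑ η, dilateEnergy A η := by gcongr
      _ < (Fintype.card F - 1) * (2 * (#A ^ 2 * #A ^ 2)) := by gcongr; omega
      _ = _ := by ring

end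

/-- Lemma for large sets: if `|A₁| > p^{1/2}` then some dilate sum covers half of `F_p`. -/
theorem dilate_sum_large (p : ℕ) (hp : p.Prime) (A₁ : Finset (ZMod p))
    (h : (p : ℝ) ^ ((1 : ℝ) / 2) < (A₁.card : ℝ)) :
    ∃ a₁ ∈ A₁, ∃ a₂ ∈ A₁, ∃ b₁ ∈ A₁, ∃ b₂ ∈ A₁,
      (0.5 : ℝ) * (p : ℝ) ≤ (((a₁ - a₂) • A₁ + (b₁ - b₂) • A₁).card : ℝ) := by
  have := Fact.mk hp
  have hA : Fintype.card (ZMod p) < #A₁ ^ 2 := by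
    rw [← Real.sqrt_eq_rpow, Real.sqrt_lt' ((Real.sqrt_nonneg _).trans_lt h)] at h
    rw [ZMod.card]
    exact_mod_cast h
  obtain ⟨ξ, hξ, hcard⟩ := exists_ne_zero_card_le_two_mul_card_add_smul A₁ hA
  obtain ⟨a₁, ha₁, a₂, ha₂, b₁, hb₁, b₂, hb₂, hne, hb⟩ := exists_sub_eq_sub_mul A₁ hA ξ
  refine ⟨a₁, ha₁, a₂, ha₂, b₁, hb₁, b₂, hb₂, ?_⟩
  rw [hb, mul_smul, ← smul_add, card_smul_finset₀ (sub_ne_zero.2 hne)]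
  rw [ZMod.card] at hcard
  have : (p : ℝ) ≤ 2 * #(A₁ + ξ • A₁) := by exact_mod_cast hcard
  linarith
end

section
/- Let X, B₁, …, B_k be nonempty finite subsets of F_p. Then |B₁ + … + B_k| · |X|^{k−1} ≤ |X+B₁| · |X+B₂| ⋯ |X+B_k|. -/
/-!
The Plünnecke–Ruzsa inequality `|n • B| |X|^(n-1) ≤ |X + B|^n`, applied to `B = ⋃ Cᵢ`, gives
the weak bound `|∑ Cᵢ| |X|^(k-1) ≤ (∑ |X + Cᵢ|)^k`. In `G^k` take `X^k` and the cyclic shifts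
`Cⱼ = ∏ᵢ B_{i+j}`: each `X^k + Cⱼ` has size `∏ |X + Bᵢ|` and `∑ Cⱼ = (∑ Bᵢ)^k`, so the weak
bound yields the `k`-th power of the desired one, up to a factor `k^k`. Applying this in `G^m`
and letting `m → ∞` removes the constant.
-/

open Pointwise Finset Fintype

lemma Nat.le_of_forall_pow_le_mul_pow {a b c : ℕ} (h : ∀ m, a ^ m ≤ c * b ^ m) : a ≤ b := by
  by_contra! hba
  obtain rfl | hb := b.eq_zero_or_pos
  · simpa [hba.ne'] using h 1
  have hb' : (0 : ℚ) < b := by exact_mod_cast hb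
  have hab : (b : ℚ) < a := by exact_mod_cast hba
  obtain ⟨m, hm⟩ := pow_unbounded_of_one_lt (c : ℚ) ((one_lt_div hb').2 hab)
  rw [div_pow, lt_div_iff₀ (pow_pos hb' m)] at hm
  exact (h m).not_gt (by exact_mod_cast hm)

namespace Fintype

variable {ι G : Type*} [Fintype ι] [DecidableEq ι] [AddCommGroup G] [DecidableEq G]

lemma piFinset_sum {κ : Type*} (s : Finset κ) (f : κ → ι → Finset G) :
    piFinset (fun i ↦ ∑ j ∈ s, f j i) = ∑ j ∈ s, piFinset (f j) := by
  classical
  induction s using Finset.induction_on with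
  | empty => ext; simp [funext_iff]
  | insert a s ha ih => simp only [sum_insert ha, ← ih, piFinset_add]

end Fintype

namespace Finset

variable {G : Type*} [AddCommGroup G] [DecidableEq G] {X : Finset G}

lemma card_nsmul_mul_card_pow_le (hX : X.Nonempty) (B : Finset G) (n : ℕ) :
    #(n • B) * #X ^ n ≤ #(X + B) ^ n * #X := by
  have hX₀ : (0 : ℚ≥0) < #X := by exact_mod_cast hX.card_pos
  have h := pluennecke_ruzsa_inequality_nsmul_add hX B n
  rw [div_pow, div_mul_eq_mul_div, le_div_iff₀ (by positivity)] at h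
  exact_mod_cast h

lemma card_sum_mul_card_pow_le_sum_pow {ι : Type*} [Fintype ι] (hX : X.Nonempty)
    (C : ι → Finset G) :
    #(∑ i, C i) * #X ^ Fintype.card ι ≤ (∑ i, #(X + C i)) ^ Fintype.card ι * #X := by
  set B := univ.biUnion C
  have hsum : ∑ i, C i ⊆ Fintype.card ι • B := by
    rw [← card_univ, ← sum_const]
    gcongr with i
    exact subset_biUnion_of_mem C (mem_univ i)
  have hadd : X + B ⊆ univ.biUnion fun i ↦ X + C i := by
    simp only [subset_iff, mem_add, mem_biUnion, B]
    rintro _ ⟨x, hx, b, ⟨i, -, hb⟩, rfl⟩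
    exact ⟨i, mem_univ i, x, hx, b, hb, rfl⟩
  calc #(∑ i, C i) * #X ^ Fintype.card ι
      ≤ #(Fintype.card ι • B) * #X ^ Fintype.card ι := by gcongr
    _ ≤ #(X + B) ^ Fintype.card ι * #X := card_nsmul_mul_card_pow_le hX B _
    _ ≤ (∑ i, #(X + C i)) ^ Fintype.card ι * #X := by
      gcongr
      exact (card_le_card hadd).trans card_biUnion_le

variable {ι : Type*} [Fintype ι] [DecidableEq ι]

lemma card_sum_mul_card_pow_le_card_pow_mul [AddGroup ι] (hX : X.Nonempty) (B : ι → Finset G) :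
    (#(∑ i, B i) * #X ^ Fintype.card ι) ^ Fintype.card ι
      ≤ Fintype.card ι ^ Fintype.card ι * ((∏ i, #(X + B i)) * #X) ^ Fintype.card ι := by
  set n := Fintype.card ι
  set X' : Finset (ι → G) := piFinset fun _ ↦ X
  set C : ι → Finset (ι → G) := fun j ↦ piFinset fun i ↦ B (j + i)
  have hX' : X'.Nonempty := piFinset_nonempty.2 fun _ ↦ hX
  have hsum : ∑ j, C j = piFinset fun _ ↦ ∑ i, B i := by
    rw [← piFinset_sum]
    congr! 2 with i
    exact Equiv.sum_comp (Equiv.addRight i) B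
  have hadd (j : ι) : #(X' + C j) = ∏ i, #(X + B i) := by
    rw [← piFinset_add, card_piFinset]
    exact Equiv.prod_comp (Equiv.addLeft j) fun i ↦ #(X + B i)
  have h := card_sum_mul_card_pow_le_sum_pow hX' C
  simp only [hsum, hadd, card_piFinset, prod_const, sum_const, card_univ, smul_eq_mul,
    X'] at h
  calc (#(∑ i, B i) * #X ^ n) ^ n = #(∑ i, B i) ^ n * (#X ^ n) ^ n := by ring
    _ ≤ (n * ∏ i, #(X + B i)) ^ n * #X ^ n := h
    _ = n ^ n * ((∏ i, #(X + B i)) * #X) ^ n := by ring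

lemma card_sum_mul_card_pow_le_prod_mul [AddGroup ι] (hX : X.Nonempty) (B : ι → Finset G) :
    #(∑ i, B i) * #X ^ Fintype.card ι ≤ (∏ i, #(X + B i)) * #X := by
  set n := Fintype.card ι
  refine le_of_pow_le_pow_left₀ (Fintype.card_ne_zero (α := ι)) (Nat.zero_le _) <|
    Nat.le_of_forall_pow_le_mul_pow (c := n ^ n) fun m ↦ ?_
  set X' : Finset (Fin m → G) := piFinset fun _ ↦ X
  set B' : ι → Finset (Fin m → G) := fun i ↦ piFinset fun _ ↦ B i
  have hX' : X'.Nonempty := piFinset_nonempty.2 fun _ ↦ hX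
  have h := card_sum_mul_card_pow_le_card_pow_mul hX' B'
  simp only [← piFinset_sum, ← piFinset_add, card_piFinset, prod_const, card_univ,
    Fintype.card_fin, prod_pow, X', B'] at h
  calc ((#(∑ i, B i) * #X ^ n) ^ n) ^ m = (#(∑ i, B i) ^ m * (#X ^ m) ^ n) ^ n := by ring
    _ ≤ n ^ n * ((∏ i, #(X + B i)) ^ m * #X ^ m) ^ n := h
    _ = n ^ n * (((∏ i, #(X + B i)) * #X) ^ n) ^ m := by ring

end Finset

theorem ruzsa_plunnecke_corollary_general (p : ℕ) (k : ℕ) (hk : 0 < k)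
    (X : Finset (ZMod p)) (B : Fin k → Finset (ZMod p))
    (hX : X.Nonempty) :
    (∑ i, B i).card * X.card ^ (k - 1) ≤ ∏ i, (X + B i).card := by
  have : NeZero k := ⟨hk.ne'⟩
  have h := card_sum_mul_card_pow_le_prod_mul hX B
  rw [Fintype.card_fin, ← pow_sub_one_mul hk.ne', ← mul_assoc] at h
  exact Nat.le_of_mul_le_mul_right h hX.card_pos

/-- Corollary of the Ruzsa–Plünnecke inequality:
`|B₁ + … + B_k| |X|^{k-1} ≤ ∏ i |X + B_i|`. -/
theorem ruzsa_plunnecke_corollary (p : ℕ) (hp : p.Prime) (k : ℕ) (hk : 0 < k)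
    (X : Finset (ZMod p)) (B : Fin k → Finset (ZMod p))
    (hX : X.Nonempty) (hB : ∀ i, (B i).Nonempty) :
    (∑ i, B i).card * X.card ^ (k - 1) ≤ ∏ i, (X + B i).card :=
  ruzsa_plunnecke_corollary_general p k hk X B hX
end

section
/- Let p be a prime and let X, Y, G be nonempty subsets of F_p. Let I denote the number of quadruples (g, x, x₁, y, y₁) with g ∈ G, x, x₁ ∈ X, y, y₁ ∈ Y satisfying x + g y = x₁ + g y₁. Then I ≤ |X|² |Y|² |G| / p + p |X| |Y|. -/
/-!
For fixed `g`, the solutions are the collisions of `(x, y) ↦ x + g y` on `X × Y`, so by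
Cauchy–Schwarz there are at least `(|X||Y|)² / p` of them. Summed over all `g ∈ 𝔽_p` there are at
most `p|X||Y| + (|X||Y|)²`, since two distinct points `(x, y) ≠ (x₁, y₁)` collide for at most one
`g`. Hence the excesses over the Cauchy–Schwarz bound, which are nonnegative, sum to at most
`p|X||Y|` over all of `𝔽_p`, and a fortiori over `G`.
-/

open Finset

section Collisions

variable {α β ι : Type*} [DecidableEq β]

def collisionCount (P : Finset α) (f : α → β) : ℕ := #{ab ∈ P ×ˢ P | f ab.1 = f ab.2}

theorem collisionCount_eq_sum_sq [Fintype β] (P : Finset α) (f : α → β) :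
    collisionCount P f = ∑ c, #{a ∈ P | f a = c} ^ 2 := by
  rw [collisionCount, card_eq_sum_card_fiberwise (f := fun ab => f ab.1) (t := univ)
    fun _ _ => mem_coe.2 (mem_univ _)]
  refine sum_congr rfl fun c _ => ?_
  rw [sq, ← card_product]
  congr 1
  ext ⟨a, b⟩
  simp only [mem_filter, mem_product]
  grind

theorem sq_card_le_card_mul_collisionCount [Fintype β] (P : Finset α) (f : α → β) :
    #P ^ 2 ≤ Fintype.card β * collisionCount P f := by
  rw [card_eq_sum_card_fiberwise (f := f) (t := univ) fun _ _ => mem_coe.2 (mem_univ _),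
    collisionCount_eq_sum_sq, ← card_univ]
  exact sq_sum_le_card_mul_sum_sq

theorem sum_collisionCount_le [DecidableEq α] [Fintype ι] (P : Finset α) (f : ι → α → β)
    (hf : ∀ a b, a ≠ b → {i | f i a = f i b}.Subsingleton) :
    ∑ i, collisionCount P (f i) ≤ #P * (Fintype.card ι + #P) := by
  have hoff : ∀ a b, a ≠ b → #{i | f i a = f i b} ≤ 1 := fun a b hab =>
    card_le_one.2 fun i hi j hj => hf a b hab (by simpa using hi) (by simpa using hj)
  have hrow : ∀ a ∈ P, ∑ b ∈ P, #{i | f i a = f i b} ≤ Fintype.card ι + #P := fun a ha => by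
    rw [← add_sum_erase _ _ ha]
    gcongr
    · exact card_le_univ _
    · calc ∑ b ∈ P.erase a, #{i | f i a = f i b} ≤ #(P.erase a) * 1 :=
            sum_le_card_nsmul _ _ _ fun b hb => hoff a b (ne_of_mem_erase hb).symm
        _ ≤ #P := by simpa using card_erase_le
  calc ∑ i, collisionCount P (f i)
      = ∑ a ∈ P, ∑ b ∈ P, #{i | f i a = f i b} := by
        simp only [collisionCount, card_filter]
        rw [sum_comm, sum_product]
    _ ≤ ∑ _a ∈ P, (Fintype.card ι + #P) := sum_le_sum hrow
    _ = #P * (Fintype.card ι + #P) := by rw [sum_const, smul_eq_mul]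

end Collisions

theorem sum_le_card_nsmul_add_of_le {ι M : Type*} [AddCommGroup M] [PartialOrder M]
    [IsOrderedAddMonoid M] {s t : Finset ι} (hst : s ⊆ t) (f : ι → M) (m b : M)
    (hm : ∀ i ∈ t, m ≤ f i) (hb : ∑ i ∈ t, f i ≤ #t • m + b) :
    ∑ i ∈ s, f i ≤ #s • m + b := by
  have hsub : ∑ i ∈ s, (f i - m) ≤ ∑ i ∈ t, (f i - m) :=
    sum_le_sum_of_subset_of_nonneg hst fun i hi _ => sub_nonneg.2 (hm i hi)
  rw [sum_sub_distrib, sum_sub_distrib, sum_const, sum_const] at hsub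
  rw [← sub_le_iff_le_add']
  calc ∑ i ∈ s, f i - #s • m ≤ ∑ i ∈ t, f i - #t • m := hsub
    _ ≤ b := sub_le_iff_le_add'.2 hb

theorem setOf_fst_add_mul_snd_eq_subsingleton {K : Type*} [Field K] {a b : K × K} (hab : a ≠ b) :
    {g : K | a.1 + g * a.2 = b.1 + g * b.2}.Subsingleton := by
  intro g (hg : a.1 + g * a.2 = b.1 + g * b.2) g' (hg' : a.1 + g' * a.2 = b.1 + g' * b.2)
  have hmul : (g - g') * (a.2 - b.2) = 0 := by linear_combination hg - hg'
  rcases mul_eq_zero.1 hmul with h | h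
  · exact sub_eq_zero.1 h
  · have h2 : a.2 = b.2 := sub_eq_zero.1 h
    have h1 : a.1 = b.1 := by
      rw [h2] at hg
      exact add_right_cancel hg
    exact absurd (Prod.ext h1 h2) hab

theorem card_filter_add_mul_eq_eq_sum_collisionCount {R : Type*} [Add R] [Mul R] [DecidableEq R]
    (X Y G : Finset R) :
    #{t ∈ G ×ˢ X ×ˢ X ×ˢ Y ×ˢ Y | t.2.1 + t.1 * t.2.2.2.1 = t.2.2.1 + t.1 * t.2.2.2.2}
      = ∑ g ∈ G, collisionCount (X ×ˢ Y) (fun a => a.1 + g * a.2) := by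
  rw [card_filter, sum_product]
  refine sum_congr rfl fun g _ => ?_
  rw [← card_filter, collisionCount]
  exact card_equiv ((Equiv.prodAssoc _ _ _).symm.trans (.prodProdProdComm _ _ _ _))
    fun _ => by simp; tauto

theorem count_energy_bound_general (p : ℕ) (hp : p.Prime)
    (X Y G : Finset (ZMod p)) :
    (((G ×ˢ X ×ˢ X ×ˢ Y ×ˢ Y).filter
        (fun t : ZMod p × ZMod p × ZMod p × ZMod p × ZMod p =>
          t.2.1 + t.1 * t.2.2.2.1 = t.2.2.1 + t.1 * t.2.2.2.2)).card : ℝ)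
      ≤ (X.card : ℝ) ^ 2 * (Y.card : ℝ) ^ 2 * G.card / p + (p : ℝ) * X.card * Y.card := by
  have : Fact p.Prime := ⟨hp⟩
  have hp0 : (0 : ℝ) < p := by exact_mod_cast hp.pos
  set P := X ×ˢ Y
  set E : ZMod p → ℝ := fun g => collisionCount P fun a => a.1 + g * a.2
  have hlower (g : ZMod p) : (#P : ℝ) ^ 2 / p ≤ E g := by
    have hcs := sq_card_le_card_mul_collisionCount P fun a : ZMod p × ZMod p => a.1 + g * a.2
    rw [ZMod.card] at hcs
    rw [div_le_iff₀' hp0]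
    simp only [E]
    exact_mod_cast hcs
  have htotal : ∑ g, E g ≤ #(univ : Finset (ZMod p)) • ((#P : ℝ) ^ 2 / p) + p * #P := by
    have hcount := sum_collisionCount_le P (fun (g : ZMod p) a => a.1 + g * a.2)
      fun _ _ => setOf_fst_add_mul_snd_eq_subsingleton
    rw [ZMod.card] at hcount
    rw [card_univ, ZMod.card, nsmul_eq_mul, mul_div_cancel₀ _ hp0.ne']
    calc ∑ g, E g ≤ ((#P * (p + #P) : ℕ) : ℝ) := by simp only [E]; exact_mod_cast hcount
      _ = _ := by push_cast; ring
  rw [card_filter_add_mul_eq_eq_sum_collisionCount, Nat.cast_sum]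
  calc _ ≤ #G • ((#P : ℝ) ^ 2 / p) + p * #P :=
        sum_le_card_nsmul_add_of_le (subset_univ G) E _ _ (fun g _ => hlower g) htotal
    _ = _ := by simp only [P, card_product, nsmul_eq_mul]; push_cast; ring

/-- The number of solutions of `x + g y = x₁ + g y₁` with `g ∈ G`, `x, x₁ ∈ X`,
`y, y₁ ∈ Y` is at most `|X|²|Y|²|G|/p + p|X||Y|`. -/
theorem count_energy_bound (p : ℕ) (hp : p.Prime)
    (X Y G : Finset (ZMod p)) (hX : X.Nonempty) (hY : Y.Nonempty) (hG : G.Nonempty) :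
    (((G ×ˢ X ×ˢ X ×ˢ Y ×ˢ Y).filter
        (fun t : ZMod p × ZMod p × ZMod p × ZMod p × ZMod p =>
          t.2.1 + t.1 * t.2.2.2.1 = t.2.2.1 + t.1 * t.2.2.2.2)).card : ℝ)
      ≤ (X.card : ℝ) ^ 2 * (Y.card : ℝ) ^ 2 * G.card / p + (p : ℝ) * X.card * Y.card :=
  count_energy_bound_general p hp X Y G
end

section
/- Let p be a prime and A a subset of F_p with |A| > 1 and 0 ∉ A. Then there exist an absolute constant c > 0, an element b₀ ∈ A, a real number N ≥ 1, and a nonempty subset A₁ ⊆ A such that for every a ∈ A₁ one has N ≤ |a*A ∩ b₀*A| < 2N, and moreover N |A₁| ≥ c |A|³ / ( |AA| log |A| ). -/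
/-!
Write `r(a, b) = |aA ∩ bA|`. Since `0 ∉ A`, the multiplicative energy `E(A)` equals
`∑_{a,b ∈ A} r(a, b)`, so some `b₀ ∈ A` has `∑_a r(a, b₀) ≥ E(A)/|A| ≥ |A|³/|AA|` by
Cauchy–Schwarz. As `1 ≤ r(a, b₀) ≤ |A|`, the values fall into `O(log |A|)` dyadic ranges
`[2^k, 2^(k+1))`; the richest one carries a `1/O(log |A|)` share of the sum, which gives
`2^k |A₁| ≫ |A|³/(|AA| log |A|)` for the set `A₁` of its elements.
-/

open Pointwise Finset

namespace Finset

theorem exists_sum_le_card_nsmul_sum_fiber {ι κ M : Type*} [DecidableEq κ] [AddCommMonoid M]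
    [LinearOrder M] [IsOrderedCancelAddMonoid M] {s : Finset ι} {t : Finset κ} {g : ι → κ}
    (hg : ∀ i ∈ s, g i ∈ t) (ht : t.Nonempty) (f : ι → M) :
    ∃ k ∈ t, ∑ i ∈ s, f i ≤ #t • ∑ i ∈ s with g i = k, f i :=
  exists_le_of_sum_le ht <| by
    rw [sum_const, ← smul_sum, sum_fiberwise_of_maps_to hg]

theorem exists_dyadic_level_sum_le {ι : Type*} {s : Finset ι} (hs : s.Nonempty) {f : ι → ℕ}
    {n : ℕ} (hpos : ∀ i ∈ s, 0 < f i) (hle : ∀ i ∈ s, f i ≤ n) :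
    ∃ k : ℕ, ∃ t ⊆ s, t.Nonempty ∧ (∀ i ∈ t, 2 ^ k ≤ f i ∧ f i < 2 ^ (k + 1)) ∧
      ∑ i ∈ s, f i ≤ (Nat.log 2 n + 1) * (2 ^ (k + 1) * #t) := by
  have hmaps : ∀ i ∈ s, Nat.log 2 (f i) ∈ range (Nat.log 2 n + 1) := fun i hi =>
    mem_range.2 (Nat.lt_succ_of_le (Nat.log_mono_right (hle i hi)))
  obtain ⟨k, -, hk⟩ :=
    exists_sum_le_card_nsmul_sum_fiber hmaps ⟨0, mem_range.2 (Nat.succ_pos _)⟩ f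
  rw [card_range, smul_eq_mul] at hk
  set t := s.filter fun i => Nat.log 2 (f i) = k
  have hlevel : ∀ i ∈ t, 2 ^ k ≤ f i ∧ f i < 2 ^ (k + 1) := by
    intro i hi
    obtain ⟨his, hik⟩ := mem_filter.1 hi
    exact (Nat.log_eq_iff (Or.inr ⟨one_lt_two, (hpos i his).ne'⟩)).1 hik
  have hsum_t : ∑ i ∈ t, f i ≤ 2 ^ (k + 1) * #t := by
    rw [mul_comm, ← smul_eq_mul]
    exact sum_le_card_nsmul _ _ _ fun i hi => (hlevel i hi).2.le
  refine ⟨k, t, filter_subset _ _, ?_, hlevel, hk.trans (Nat.mul_le_mul_left _ hsum_t)⟩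
  rw [nonempty_iff_ne_empty]
  intro hempty
  rw [hempty, sum_empty, mul_zero, Nat.le_zero, sum_eq_zero_iff] at hk
  obtain ⟨i, hi⟩ := hs
  exact (hpos i hi).ne' (hk i hi)

end Finset

section EnergyAndIntersections

variable {G : Type*} [DecidableEq G]

theorem card_filter_mul_eq_mul_eq_card_smul_finset_inter [MonoidWithZero G]
    [IsLeftCancelMulZero G] (A : Finset G) {a b : G} (ha : a ≠ 0) (hb : b ≠ 0) :
    #{y ∈ A ×ˢ A | a * y.1 = b * y.2} = #(a • A ∩ b • A) := by
  refine card_nbij (fun y => a * y.1) ?_ ?_ ?_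
  · rintro ⟨x, y⟩ hxy
    simp only [coe_filter, mem_product, Set.mem_ofPred_eq] at hxy
    exact mem_inter.2
      ⟨smul_mem_smul_finset hxy.1.1, mem_smul_finset.2 ⟨y, hxy.1.2, hxy.2.symm⟩⟩
  · rintro ⟨x, y⟩ hxy ⟨x', y'⟩ hxy' h
    simp only [coe_filter, mem_product, Set.mem_ofPred_eq] at hxy hxy' h
    have hx : x = x' := mul_left_cancel₀ ha h
    have hy : y = y' := mul_left_cancel₀ hb (by rw [← hxy.2, ← hxy'.2, h])
    rw [hx, hy]
  · intro z hz
    obtain ⟨hza, hzb⟩ := mem_inter.1 hz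
    obtain ⟨x, hx, rfl⟩ := mem_smul_finset.1 hza
    obtain ⟨y, hy, hxy⟩ := mem_smul_finset.1 hzb
    exact ⟨(x, y), by simp_all, rfl⟩

theorem mulEnergy_eq_sum_card_smul_finset_inter [MonoidWithZero G] [IsLeftCancelMulZero G]
    {A : Finset G} (h0 : (0 : G) ∉ A) :
    mulEnergy A A = ∑ a ∈ A, ∑ b ∈ A, #(a • A ∩ b • A) := by
  have hne : ∀ a ∈ A, a ≠ 0 := fun a ha h => h0 (h ▸ ha)
  simp only [mulEnergy, card_filter, sum_product (s := A ×ˢ A) (t := A ×ˢ A)]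
  rw [sum_product]
  refine sum_congr rfl fun a ha => sum_congr rfl fun b hb => ?_
  rw [← card_filter]
  exact card_filter_mul_eq_mul_eq_card_smul_finset_inter A (hne a ha) (hne b hb)

theorem exists_card_pow_three_le_card_mul_mul_sum_card_inter
    [CommMonoidWithZero G] [IsLeftCancelMulZero G] {A : Finset G} (h0 : (0 : G) ∉ A)
    (hA : A.Nonempty) :
    ∃ b ∈ A, #A ^ 3 ≤ #(A * A) * ∑ a ∈ A, #(a • A ∩ b • A) := by
  obtain ⟨b, hb, hE⟩ : ∃ b ∈ A, mulEnergy A A ≤ #A * ∑ a ∈ A, #(a • A ∩ b • A) :=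
    exists_le_of_sum_le hA <| by
      rw [sum_const, ← mul_sum, sum_comm, ← mulEnergy_eq_sum_card_smul_finset_inter h0,
        smul_eq_mul]
  refine ⟨b, hb, Nat.le_of_mul_le_mul_left ?_ hA.card_pos⟩
  calc #A * #A ^ 3 = #A ^ 2 * #A ^ 2 := by ring
    _ ≤ #(A * A) * mulEnergy A A := le_card_mul_mul_mulEnergy A A
    _ ≤ #(A * A) * (#A * ∑ a ∈ A, #(a • A ∩ b • A)) := Nat.mul_le_mul_left _ hE
    _ = #A * (#(A * A) * ∑ a ∈ A, #(a • A ∩ b • A)) := by ring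

theorem card_smul_finset_inter_pos [CommMonoid G] {A : Finset G} {a b : G} (ha : a ∈ A)
    (hb : b ∈ A) : 0 < #(a • A ∩ b • A) :=
  card_pos.2 ⟨a * b,
    mem_inter.2 ⟨smul_mem_smul_finset hb, mul_comm b a ▸ smul_mem_smul_finset ha⟩⟩

theorem card_smul_finset_inter_le [Monoid G] (A : Finset G) (a b : G) :
    #(a • A ∩ b • A) ≤ #A :=
  (card_le_card inter_subset_right).trans card_smul_finset_le

end EnergyAndIntersections

theorem Nat.log_two_add_one_mul_log_two_le_two_mul_log {n : ℕ} (hn : 2 ≤ n) :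
    ((Nat.log 2 n + 1 : ℕ) : ℝ) * Real.log 2 ≤ 2 * Real.log n := by
  have hpow : Real.log ((2 : ℝ) ^ Nat.log 2 n) ≤ Real.log n :=
    Real.log_le_log (by positivity) (by exact_mod_cast Nat.pow_log_le_self 2 (by omega))
  have hlog2 : Real.log 2 ≤ Real.log n := Real.log_le_log two_pos (by exact_mod_cast hn)
  rw [Real.log_pow] at hpow
  push_cast
  linarith

/-- The pigeonhole step in Garaev's proof: there exist `b₀ ∈ A`, a dyadic level `N`
and a subset `A₁ ⊆ A` such that `N ≤ |a*A ∩ b₀*A| < 2N` for all `a ∈ A₁` and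
`N|A₁| ≫ |A|³ / (|AA| log |A|)`. -/
theorem exists_dyadic_level :
    ∃ c : ℝ, 0 < c ∧
      ∀ (p : ℕ), p.Prime → ∀ A : Finset (ZMod p), 1 < A.card → (0 : ZMod p) ∉ A →
        ∃ b₀ ∈ A, ∃ N : ℝ, 1 ≤ N ∧
          ∃ A₁ ⊆ A, A₁.Nonempty ∧
            (∀ a ∈ A₁, N ≤ ((a • A ∩ b₀ • A).card : ℝ) ∧
              ((a • A ∩ b₀ • A).card : ℝ) < 2 * N) ∧
            c * (A.card : ℝ) ^ 3 / (((A * A).card : ℝ) * Real.log (A.card : ℝ))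
              ≤ N * A₁.card := by
  refine ⟨Real.log 2 / 4, by positivity, fun p hp A hA h0 => ?_⟩
  have : Fact p.Prime := ⟨hp⟩
  have hAne : A.Nonempty := card_pos.1 (by omega)
  obtain ⟨b₀, hb₀, hcube⟩ := exists_card_pow_three_le_card_mul_mul_sum_card_inter h0 hAne
  obtain ⟨k, A₁, hA₁, hA₁ne, hlevel, hsum⟩ := exists_dyadic_level_sum_le hAne
    (fun a ha => card_smul_finset_inter_pos ha hb₀) (fun a _ => card_smul_finset_inter_le A a b₀)
  refine ⟨b₀, hb₀, 2 ^ k, one_le_pow₀ one_le_two, A₁, hA₁, hA₁ne, fun a ha => ?_, ?_⟩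
  · obtain ⟨hlo, hhi⟩ := hlevel a ha
    exact ⟨by exact_mod_cast hlo, by rw [← pow_succ']; exact_mod_cast hhi⟩
  have hcount : (#A : ℝ) ^ 3 ≤ #(A * A) * ((Nat.log 2 #A + 1 : ℕ) * (2 ^ (k + 1) * #A₁)) := by
    exact_mod_cast hcube.trans (Nat.mul_le_mul_left _ hsum)
  have hlevels := Nat.log_two_add_one_mul_log_two_le_two_mul_log hA
  have hlogA : 0 < Real.log #A := Real.log_pos (by exact_mod_cast hA)
  rw [div_le_iff₀ (by positivity)]
  calc Real.log 2 / 4 * #A ^ 3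
      ≤ Real.log 2 / 4 * (#(A * A) * ((Nat.log 2 #A + 1 : ℕ) * (2 ^ (k + 1) * #A₁))) := by
        gcongr
    _ = ((Nat.log 2 #A + 1 : ℕ) * Real.log 2) * (#(A * A) * 2 ^ k * #A₁) / 2 := by ring
    _ ≤ (2 * Real.log #A) * (#(A * A) * 2 ^ k * #A₁) / 2 := by gcongr
    _ = 2 ^ k * #A₁ * (#(A * A) * Real.log #A) := by ring
end

section
/- Let p be a prime, A a nonempty finite subset of F_p, and a, b ∈ F_p with a ≠ 0 and b ≠ 0. Suppose N is a real number with 1 ≤ N ≤ |a*A ∩ b*A|. Then |a*A + b*A| ≤ |A+A|² / N and |a*A − b*A| ≤ |A+A|² / N. -/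
/-!
Put `M = a • A ∩ b • A`. Ruzsa's triangle inequality with `M` as the middle set gives
`|a • A ± b • A| |M| ≤ |a • A + M| |b • A + M|`, and `a • A + M ⊆ a • (A + A)` has at most
`|A + A|` elements since dilation by a nonzero scalar is injective; likewise for `b`.
-/

open Pointwise Finset

section
variable {α V : Type*} [GroupWithZero α] [AddCommGroup V] [DistribMulAction α V] [DecidableEq V]
  {a b : α} {A M : Finset V}

lemma card_smul_add_le_card_add (ha : a ≠ 0) (hM : M ⊆ a • A) : #(a • A + M) ≤ #(A + A) :=
  calc #(a • A + M) ≤ #(a • A + a • A) := card_le_card (add_subset_add_left hM)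
    _ = #(A + A) := by rw [← smul_add, card_smul_finset₀ ha]

lemma card_smul_add_smul_mul_card_inter_le (ha : a ≠ 0) (hb : b ≠ 0) :
    #(a • A + b • A) * #(a • A ∩ b • A) ≤ #(A + A) ^ 2 :=
  calc #(a • A + b • A) * #(a • A ∩ b • A)
      ≤ #(a • A + a • A ∩ b • A) * #(a • A ∩ b • A + b • A) :=
        ruzsa_triangle_inequality_add_add_add ..
    _ ≤ #(A + A) * #(A + A) := by
        rw [add_comm _ (b • A)]
        exact Nat.mul_le_mul (card_smul_add_le_card_add ha inter_subset_left)
          (card_smul_add_le_card_add hb inter_subset_right)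
    _ = #(A + A) ^ 2 := (sq _).symm

lemma card_smul_sub_smul_mul_card_inter_le (ha : a ≠ 0) (hb : b ≠ 0) :
    #(a • A - b • A) * #(a • A ∩ b • A) ≤ #(A + A) ^ 2 :=
  calc #(a • A - b • A) * #(a • A ∩ b • A)
      ≤ #(a • A + a • A ∩ b • A) * #(b • A + a • A ∩ b • A) :=
        ruzsa_triangle_inequality_sub_add_add ..
    _ ≤ #(A + A) * #(A + A) :=
        Nat.mul_le_mul (card_smul_add_le_card_add ha inter_subset_left)
          (card_smul_add_le_card_add hb inter_subset_right)
    _ = #(A + A) ^ 2 := (sq _).symm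

end

lemma cast_le_sq_div_of_mul_le {x y m : ℕ} {N : ℝ} (hN : 0 < N) (hNm : N ≤ m)
    (h : x * m ≤ y ^ 2) : (x : ℝ) ≤ y ^ 2 / N := by
  rw [le_div_iff₀ hN]
  calc (x : ℝ) * N ≤ x * m := by gcongr
    _ ≤ y ^ 2 := mod_cast h

theorem dilate_sum_diff_bound_general (p : ℕ) (hp : p.Prime) (A : Finset (ZMod p))
    (a b : ZMod p) (ha : a ≠ 0) (hb : b ≠ 0)
    (N : ℝ) (hN1 : 1 ≤ N) (hN2 : N ≤ ((a • A ∩ b • A).card : ℝ)) :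
    ((a • A + b • A).card : ℝ) ≤ ((A + A).card : ℝ) ^ 2 / N ∧
    ((a • A - b • A).card : ℝ) ≤ ((A + A).card : ℝ) ^ 2 / N := by
  have : Fact p.Prime := ⟨hp⟩
  have hN : 0 < N := one_pos.trans_le hN1
  exact ⟨cast_le_sq_div_of_mul_le hN hN2 (card_smul_add_smul_mul_card_inter_le ha hb),
    cast_le_sq_div_of_mul_le hN hN2 (card_smul_sub_smul_mul_card_inter_le ha hb)⟩

/-- If `N ≤ |a*A ∩ b*A|` then `|a*A ± b*A| ≤ |A+A|²/N`. -/
theorem dilate_sum_diff_bound (p : ℕ) (hp : p.Prime) (A : Finset (ZMod p))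
    (hA : A.Nonempty) (a b : ZMod p) (ha : a ≠ 0) (hb : b ≠ 0)
    (N : ℝ) (hN1 : 1 ≤ N) (hN2 : N ≤ ((a • A ∩ b • A).card : ℝ)) :
    ((a • A + b • A).card : ℝ) ≤ ((A + A).card : ℝ) ^ 2 / N ∧
    ((a • A - b • A).card : ℝ) ≤ ((A + A).card : ℝ) ^ 2 / N :=
  dilate_sum_diff_bound_general p hp A a b ha hb N hN1 hN2
end
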